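/- arXiv:2602.03047 — 4 statements merged into one kernel-verified Lean document; each statement's English description precedes it below -/
import Mathlib

section
/- Let d ≥ 1 be an integer and let s be a real number with d−2 < s < d and s ≠ 0. Then for every integer k ≥ 0, all the denominators 2n−2k+s−d (n ≥ 0) are nonzero, the series below converges absolutely, and ∑_{n=0}^∞ [Γ(s/2+n) · Γ((s−d)/2+n+1) / (Γ(d/2+n) · n!)] · (1/(2n+2k+d) + 1/(2n−2k+s−d)) = 0. -/
/-!
For `k = 0` the series telescopes: `term d s 0 n = antidiffZero (n+1) - antidiffZero n`, because
`coeff (n+1) / coeff n` is rational in `n`. For the step `k → k+1` a Zeilberger certificate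
`antidiffStep k` telescopes the combination
`(2k+d)(2k+2) term k n - (2k+2-s+d)(2k+2d-s) term (k+1) n`. Both antidifferences vanish at
`n = 0` and are `coeff n` times a rational function of `n` with a finite limit, so all sums vanish
by induction on `k` once `coeff n → 0`.

For `n > k` the summands are nonnegative and dominated by `2 term 0 n` for large `n`, and the
partial sums `antidiffZero N` of `term 0` are `≤ 0`; this gives absolute convergence. The partial
sums then converge, hence so does `coeff n`, and a positive limit `c` would make
`term 0 n ≥ c / (2(2n+d))` eventually, contradicting the divergence of the harmonic series.
-/

open Real Filter Topology Finset

noncomputable def coeff (d s : ℝ) (n : ℕ) : ℝ :=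
  Gamma (s / 2 + n) * Gamma ((s - d) / 2 + n + 1) / (Gamma (d / 2 + n) * (n.factorial : ℝ))

noncomputable def term (d s : ℝ) (k n : ℕ) : ℝ :=
  coeff d s n *
    (1 / (2 * (n : ℝ) + 2 * (k : ℝ) + d) + 1 / (2 * (n : ℝ) - 2 * (k : ℝ) + s - d))

noncomputable def antidiffZero (d s : ℝ) (n : ℕ) : ℝ :=
  coeff d s n * (2 * n / (2 * n + s - d)) / (s - d)

noncomputable def antidiffStep (d s : ℝ) (k n : ℕ) : ℝ :=
  coeff d s n * (2 * n / (2 * n + 2 * k + d)) * ((2 * n + d - 2) / (2 * n - 2 * k + s - d - 2)) *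
    (4 * k + 2 * d + 2 - s)

section

variable {d s : ℝ}

lemma two_mul_intCast_add_sub_ne_zero (h1 : d - 2 < s) (h2 : s < d) (m : ℤ) :
    2 * (m : ℝ) + s - d ≠ 0 := by
  intro h
  have h₀ : (0 : ℤ) < m := by exact_mod_cast (by linarith : (0 : ℝ) < m)
  have h₁ : m < 1 := by exact_mod_cast (by linarith : (m : ℝ) < 1)
  omega

lemma coeff_succ (hd : 0 < d) (h1 : d - 2 < s) (hs : s ≠ 0) (n : ℕ) :
    coeff d s (n + 1) =
      coeff d s n * ((2 * n + s) * (2 * n + s - d + 2)) / ((2 * n + d) * (2 * n + 2)) := by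
  have hn : (0 : ℝ) ≤ n := n.cast_nonneg
  have ha : s / 2 + n ≠ 0 := by
    rcases n.eq_zero_or_pos with rfl | hpos
    · simpa using hs
    · have : (1 : ℝ) ≤ n := by exact_mod_cast hpos
      linarith
  have hb : (s - d) / 2 + n + 1 ≠ 0 := by linarith
  have hc : d / 2 + n ≠ 0 := by positivity
  have hΓ : Gamma (d / 2 + n) ≠ 0 := (Gamma_pos_of_pos (by positivity)).ne'
  unfold coeff
  push_cast [Nat.factorial_succ, ← add_assoc]
  rw [Gamma_add_one ha, Gamma_add_one hb, Gamma_add_one hc]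
  field_simp
  ring

lemma coeff_pos (hd : 0 < d) (h1 : d - 2 < s) {n : ℕ} (hn : 1 ≤ n) : 0 < coeff d s n := by
  have hn' : (1 : ℝ) ≤ n := by exact_mod_cast hn
  unfold coeff
  have := Gamma_pos_of_pos (by linarith : 0 < s / 2 + n)
  have := Gamma_pos_of_pos (by linarith : 0 < (s - d) / 2 + n + 1)
  have := Gamma_pos_of_pos (by positivity : 0 < d / 2 + n)
  positivity

lemma term_zero_eq_antidiffZero_sub (hd : 0 < d) (h1 : d - 2 < s) (h2 : s < d) (hs : s ≠ 0)
    (n : ℕ) : term d s 0 n = antidiffZero d s (n + 1) - antidiffZero d s n := by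
  have h₀ := two_mul_intCast_add_sub_ne_zero h1 h2 n
  have h₁ := two_mul_intCast_add_sub_ne_zero h1 h2 (n + 1)
  have h₂ : s - d ≠ 0 := by linarith
  push_cast at h₀ h₁
  unfold term antidiffZero
  rw [coeff_succ hd h1 hs]
  push_cast
  simp only [mul_zero, sub_zero, add_zero]
  field_simp
  ring

lemma term_combination_eq_antidiffStep_sub (hd : 0 < d) (h1 : d - 2 < s) (h2 : s < d)
    (hs : s ≠ 0) (k n : ℕ) :
    (2 * k + d) * (2 * k + 2) * term d s k n -
        (2 * k + 2 - s + d) * (2 * k + 2 * d - s) * term d s (k + 1) n =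
      antidiffStep d s k (n + 1) - antidiffStep d s k n := by
  have hne := two_mul_intCast_add_sub_ne_zero h1 h2
  have h₀ : 2 * ((n : ℝ) - k) + s - d ≠ 0 := by simpa using hne (n - k)
  have h₁ : 2 * ((n : ℝ) - (k + 1)) + s - d ≠ 0 := by simpa using hne (n - (k + 1))
  have h₂ : 2 * ((n : ℝ) - k) + s - d - 2 ≠ 0 := by
    convert hne (n - k - 1) using 1; push_cast; ring
  have h₃ : 2 * ((n : ℝ) + 1 - k) + s - d - 2 ≠ 0 := by convert h₀ using 1; ring
  unfold term antidiffStep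
  rw [coeff_succ hd h1 hs]
  push_cast
  field_simp
  ring

lemma sum_range_term_zero (hd : 0 < d) (h1 : d - 2 < s) (h2 : s < d) (hs : s ≠ 0) (N : ℕ) :
    ∑ n ∈ range N, term d s 0 n = antidiffZero d s N := by
  simp only [term_zero_eq_antidiffZero_sub hd h1 h2 hs, sum_range_sub]
  simp [antidiffZero]

lemma sum_range_term_combination (hd : 0 < d) (h1 : d - 2 < s) (h2 : s < d) (hs : s ≠ 0)
    (k N : ℕ) :
    (2 * k + d) * (2 * k + 2) * ∑ n ∈ range N, term d s k n -
        (2 * k + 2 - s + d) * (2 * k + 2 * d - s) * ∑ n ∈ range N, term d s (k + 1) n =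
      antidiffStep d s k N := by
  simp only [mul_sum, ← sum_sub_distrib, term_combination_eq_antidiffStep_sub hd h1 h2 hs,
    sum_range_sub]
  simp [antidiffStep]

lemma term_nonneg (hd : 0 < d) (h1 : d - 2 < s) {k n : ℕ} (hkn : k < n) : 0 ≤ term d s k n := by
  have hkn' : (k : ℝ) + 1 ≤ n := by exact_mod_cast hkn
  have := coeff_pos hd h1 (k.zero_lt_of_lt hkn)
  have : 0 < 2 * (n : ℝ) - 2 * k + s - d := by linarith
  unfold term
  positivity

lemma antidiffZero_nonpos (hd : 0 < d) (h1 : d - 2 < s) (h2 : s < d) (n : ℕ) :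
    antidiffZero d s n ≤ 0 := by
  rcases n.eq_zero_or_pos with rfl | hn
  · simp [antidiffZero]
  have hn' : (1 : ℝ) ≤ n := by exact_mod_cast hn
  have := coeff_pos hd h1 hn
  have : 0 < 2 * (n : ℝ) + s - d := by linarith
  exact div_nonpos_of_nonneg_of_nonpos (by positivity) (by linarith)

lemma summable_term_zero (hd : 0 < d) (h1 : d - 2 < s) (h2 : s < d) (hs : s ≠ 0) :
    Summable (term d s 0) := by
  rw [← summable_nat_add_iff 1]
  refine summable_of_sum_range_le (c := -term d s 0 0)
    (fun n => term_nonneg hd h1 n.succ_pos) fun N => ?_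
  have := antidiffZero_nonpos hd h1 h2 (N + 1)
  rw [← sum_range_term_zero hd h1 h2 hs, sum_range_succ'] at this
  linarith

lemma term_le_two_mul_term_zero (hd : 0 < d) (h1 : d - 2 < s) {k n : ℕ} (hkn : 2 * k + 2 ≤ n) :
    term d s k n ≤ 2 * term d s 0 n := by
  have hkn' : 2 * (k : ℝ) + 2 ≤ n := by exact_mod_cast hkn
  have hk : (0 : ℝ) ≤ k := k.cast_nonneg
  have hu := coeff_pos hd h1 (by omega : 1 ≤ n)
  have hB : 0 < 2 * (n : ℝ) - 2 * k + s - d := by linarith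
  have hC : 0 < 2 * (n : ℝ) + d := by linarith
  have hD : 0 < 2 * (n : ℝ) + s - d := by linarith
  have e₁ : 1 / (2 * (n : ℝ) + 2 * k + d) ≤ 1 / (2 * n + d) :=
    one_div_le_one_div_of_le hC (by linarith)
  have e₂ : 1 / (2 * (n : ℝ) - 2 * k + s - d) ≤ 2 * (1 / (2 * n + s - d)) := by
    rw [mul_one_div, div_le_div_iff₀ hB hD]
    linarith
  have := one_div_pos.2 hC
  unfold term
  rw [mul_left_comm]
  gcongr
  simp only [Nat.cast_zero, mul_zero, add_zero, sub_zero]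
  linarith

lemma summable_abs_term (hd : 0 < d) (h1 : d - 2 < s) (h2 : s < d) (hs : s ≠ 0) (k : ℕ) :
    Summable fun n => |term d s k n| := by
  refine ((summable_term_zero hd h1 h2 hs).mul_left 2).of_norm_bounded_eventually_nat ?_
  filter_upwards [eventually_ge_atTop (2 * k + 2)] with n hn
  rw [norm_abs_eq_norm, norm_of_nonneg (term_nonneg hd h1 (by omega))]
  exact term_le_two_mul_term_zero hd h1 hn

lemma eq_zero_of_tendsto_coeff (hd : 0 < d) (h1 : d - 2 < s) (h2 : s < d) (hs : s ≠ 0) {c : ℝ}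
    (hc : Tendsto (coeff d s) atTop (𝓝 c)) : c = 0 := by
  have hc₀ : 0 ≤ c :=
    ge_of_tendsto hc ((eventually_ge_atTop 1).mono fun n hn => (coeff_pos hd h1 hn).le)
  by_contra hne
  have hpos : 0 < c := lt_of_le_of_ne hc₀ (Ne.symm hne)
  apply Real.not_summable_one_div_natCast
  refine Summable.of_norm_bounded_eventually_nat
    ((summable_term_zero hd h1 h2 hs).mul_left (2 * (d + 2) / c)) ?_
  filter_upwards [hc (Ioi_mem_nhds (half_lt_self hpos)), eventually_ge_atTop 1] with n hu hn
  have hn' : (1 : ℝ) ≤ n := by exact_mod_cast hn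
  have hC : 0 < 2 * (n : ℝ) + d := by linarith
  have hD : 0 < 2 * (n : ℝ) + s - d := by linarith
  have hterm : coeff d s n / (2 * n + d) ≤ term d s 0 n := by
    have := coeff_pos hd h1 hn
    unfold term
    simp only [Nat.cast_zero, mul_zero, add_zero, sub_zero]
    rw [div_eq_mul_one_div]
    gcongr
    exact le_add_of_nonneg_right (by positivity)
  rw [norm_of_nonneg (by positivity)]
  calc 1 / (n : ℝ) ≤ (d + 2) / (2 * n + d) := by
        rw [div_le_div_iff₀ (by positivity) hC]
        nlinarith
    _ ≤ 2 * (d + 2) / c * (coeff d s n / (2 * n + d)) := by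
        rw [div_mul_div_comm, div_le_div_iff₀ hC (by positivity)]
        have hu' : 0 < 2 * coeff d s n - c := by linarith [show c / 2 < coeff d s n from hu]
        nlinarith [mul_pos (mul_pos (by linarith : 0 < d + 2) hC) hu']
    _ ≤ 2 * (d + 2) / c * term d s 0 n := by gcongr

lemma tendsto_coeff_zero (hd : 0 < d) (h1 : d - 2 < s) (h2 : s < d) (hs : s ≠ 0) :
    Tendsto (coeff d s) atTop (𝓝 0) := by
  have hT : Tendsto (antidiffZero d s) atTop (𝓝 (∑' n, term d s 0 n)) := by
    simpa only [sum_range_term_zero hd h1 h2 hs] using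
      (summable_term_zero hd h1 h2 hs).tendsto_sum_tsum_nat
  have hlim := (hT.mul_const (s - d)).mul
    (tendsto_add_mul_div_add_mul_atTop_nhds (s - d) 0 2 two_ne_zero)
  have hcoeff := hlim.congr' <| (eventually_ge_atTop 1).mono fun n hn => by
    have hn' : (1 : ℝ) ≤ n := by exact_mod_cast hn
    have : 2 * (n : ℝ) + s - d ≠ 0 := by linarith
    have : s - d ≠ 0 := by linarith
    unfold antidiffZero
    field_simp
    ring
  rwa [eq_zero_of_tendsto_coeff hd h1 h2 hs hcoeff] at hcoeff

lemma tendsto_antidiffZero (hd : 0 < d) (h1 : d - 2 < s) (h2 : s < d) (hs : s ≠ 0) :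
    Tendsto (antidiffZero d s) atTop (𝓝 0) := by
  have := ((tendsto_coeff_zero hd h1 h2 hs).mul
    (tendsto_add_mul_div_add_mul_atTop_nhds 0 (s - d) 2 two_ne_zero)).div_const (s - d)
  rw [zero_mul, zero_div] at this
  exact this.congr fun n => by unfold antidiffZero; ring

lemma tendsto_antidiffStep (hd : 0 < d) (h1 : d - 2 < s) (h2 : s < d) (hs : s ≠ 0) (k : ℕ) :
    Tendsto (antidiffStep d s k) atTop (𝓝 0) := by
  have := (((tendsto_coeff_zero hd h1 h2 hs).mul
    (tendsto_add_mul_div_add_mul_atTop_nhds 0 (2 * k + d) 2 two_ne_zero)).mul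
    (tendsto_add_mul_div_add_mul_atTop_nhds (d - 2) (s - d - 2 - 2 * k) 2 two_ne_zero)).mul_const
    (4 * k + 2 * d + 2 - s)
  rw [zero_mul, zero_mul, zero_mul] at this
  exact this.congr fun n => by unfold antidiffStep; ring_nf

lemma tsum_term_eq_zero (hd : 0 < d) (h1 : d - 2 < s) (h2 : s < d) (hs : s ≠ 0) (k : ℕ) :
    ∑' n, term d s k n = 0 := by
  have hsum (k : ℕ) := (summable_abs_term hd h1 h2 hs k).of_abs
  induction k with
  | zero =>
    refine tendsto_nhds_unique (hsum 0).tendsto_sum_tsum_nat ?_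
    simpa only [sum_range_term_zero hd h1 h2 hs] using tendsto_antidiffZero hd h1 h2 hs
  | succ k ih =>
    have hlim := ((hsum k).tendsto_sum_tsum_nat.const_mul ((2 * k + d) * (2 * k + 2))).sub
      ((hsum (k + 1)).tendsto_sum_tsum_nat.const_mul ((2 * k + 2 - s + d) * (2 * k + 2 * d - s)))
    simp only [sum_range_term_combination hd h1 h2 hs, ih, mul_zero, zero_sub] at hlim
    have hk : (0 : ℝ) ≤ k := k.cast_nonneg
    have hB : (2 * k + 2 - s + d) * (2 * k + 2 * d - s) ≠ 0 := by
      apply mul_ne_zero <;> linarith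
    have := tendsto_nhds_unique hlim (tendsto_antidiffStep hd h1 h2 hs k)
    rw [neg_eq_zero, mul_eq_zero] at this
    exact this.resolve_left hB

end

/-- For `d ≥ 1`, `d − 2 < s < d`, `s ≠ 0` and any integer `k ≥ 0`,
all denominators `2n − 2k + s − d` are nonzero, the series converges absolutely,
and the sum vanishes. -/
theorem stmt0 (d : ℕ) (hd : 1 ≤ d) (s : ℝ) (h1 : (d : ℝ) - 2 < s) (h2 : s < d)
    (hs : s ≠ 0) (k : ℕ) :
    (∀ n : ℕ, 2 * (n : ℝ) - 2 * (k : ℝ) + s - (d : ℝ) ≠ 0) ∧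
    Summable (fun n : ℕ =>
      |Real.Gamma (s / 2 + n) * Real.Gamma ((s - d) / 2 + n + 1) /
          (Real.Gamma ((d : ℝ) / 2 + n) * (n.factorial : ℝ)) *
        (1 / (2 * (n : ℝ) + 2 * (k : ℝ) + d) + 1 / (2 * (n : ℝ) - 2 * (k : ℝ) + s - d))|) ∧
    ∑' n : ℕ, Real.Gamma (s / 2 + n) * Real.Gamma ((s - d) / 2 + n + 1) /
          (Real.Gamma ((d : ℝ) / 2 + n) * (n.factorial : ℝ)) *
        (1 / (2 * (n : ℝ) + 2 * (k : ℝ) + d) + 1 / (2 * (n : ℝ) - 2 * (k : ℝ) + s - d))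
      = 0 := by
  have hd' : (0 : ℝ) < d := by exact_mod_cast hd
  refine ⟨fun n h => two_mul_intCast_add_sub_ne_zero h1 h2 (n - k) ?_,
    summable_abs_term hd' h1 h2 hs k, tsum_term_eq_zero hd' h1 h2 hs k⟩
  push_cast
  linarith
end

section
/- Let d ≥ 2 be an integer, let s be a real number, and let w, r > 0 be real numbers with w ≠ r. Then ∫_{−1}^{1} (1−t²)^{(d−3)/2} · (w² + r² − 2wrt)^{−s/2} dt = (2^{d−2}/(w+r)^s) · (Γ((d−1)/2)²/Γ(d−1)) · ₂F₁((d−1)/2, s/2; d−1; 4wr/(w+r)²), where 0 ≤ 4wr/(w+r)² < 1. -/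
open Real MeasureTheory

/-- Rising factorial (Pochhammer symbol) `(x)_n = x(x+1)⋯(x+n−1)`. -/
noncomputable def rpoch (x : ℝ) (n : ℕ) : ℝ := ∏ i ∈ Finset.range n, (x + i)

/-- Gauss hypergeometric series `₂F₁(a,b;c;z) = ∑ (a)_k (b)_k / ((c)_k k!) z^k`. -/
noncomputable def hyp2F1 (a b c z : ℝ) : ℝ :=
  ∑' k : ℕ, rpoch a k * rpoch b k / (rpoch c k * (k.factorial : ℝ)) * z ^ k

lemma rpoch_zero (x : ℝ) : rpoch x 0 = 1 := by simp [rpoch]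

lemma rpoch_succ (x : ℝ) (n : ℕ) : rpoch x (n + 1) = rpoch x n * (x + n) := by
  simp [rpoch, Finset.prod_range_succ]

lemma rpoch_pos {x : ℝ} (hx : 0 < x) (n : ℕ) : 0 < rpoch x n := by
  refine Finset.prod_pos fun i _ => by positivity

lemma abs_rpoch_le (a : ℝ) (n : ℕ) : |rpoch a n| ≤ rpoch (|a| + 1) n := by
  rw [rpoch, rpoch, Finset.abs_prod]
  refine Finset.prod_le_prod (fun i _ => abs_nonneg _) fun i _ => ?_
  calc |a + i| ≤ |a| + i := by
        simpa using abs_add_le a (i : ℝ)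
    _ ≤ |a| + 1 + i := by linarith

lemma Gamma_rpoch {x : ℝ} (hx : 0 < x) (n : ℕ) :
    Real.Gamma (x + n) = Real.Gamma x * rpoch x n := by
  induction n with
  | zero => simp [rpoch_zero]
  | succ n ih =>
      have hxn : x + (n : ℝ) ≠ 0 := by positivity
      have : x + ((n : ℕ) + 1 : ℕ) = (x + n) + 1 := by push_cast; ring
      rw [this, Real.Gamma_add_one hxn, ih, rpoch_succ]; ring

lemma summable_ratio_aux {b ρ : ℝ} (hb : 0 < b) (hρ0 : 0 < ρ) (hρ1 : ρ < 1) :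
    Summable (fun k : ℕ => rpoch b k / (k.factorial : ℝ) * ((k : ℝ) + 1) * ρ ^ k) := by
  set f : ℕ → ℝ := fun k => rpoch b k / (k.factorial : ℝ) * ((k : ℝ) + 1) * ρ ^ k with hf
  have hfpos : ∀ k, 0 < f k := fun k => by
    have := rpoch_pos hb k
    have : (0:ℝ) < (k.factorial : ℝ) := by positivity
    positivity
  refine summable_of_ratio_test_tendsto_lt_one hρ1
    (Filter.Eventually.of_forall fun k => (hfpos k).ne') ?_
  have key : ∀ k : ℕ, ‖f (k+1)‖ / ‖f k‖ =
      (1 + (b - 1) * (1 / ((k:ℝ) + 1))) * (1 + 1 * (1 / ((k:ℝ) + 1))) * ρ := by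
    intro k
    have h1 : (0:ℝ) < (k:ℝ) + 1 := by positivity
    have h2 : ((k+1).factorial : ℝ) = (k.factorial : ℝ) * ((k:ℝ) + 1) := by
      rw [Nat.factorial_succ]; push_cast; ring
    have h3 : (0:ℝ) < (k.factorial : ℝ) := by positivity
    rw [Real.norm_of_nonneg (hfpos _).le, Real.norm_of_nonneg (hfpos _).le, hf]
    simp only [rpoch_succ]
    rw [h2]
    have hr := (rpoch_pos hb k).ne'
    push_cast
    field_simp
    ring
  simp only [key]
  have h0 : Filter.Tendsto (fun k : ℕ => 1 / ((k:ℝ) + 1)) Filter.atTop (nhds 0) :=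
    tendsto_one_div_add_atTop_nhds_zero_nat
  have := (((h0.const_mul (b-1)).const_add 1).mul ((h0.const_mul 1).const_add 1)).mul_const ρ
  simpa using this

lemma summable_poch_geom {b ρ : ℝ} (hb : 0 < b) (hρ0 : 0 ≤ ρ) (hρ1 : ρ < 1) :
    Summable (fun k : ℕ => rpoch b k / (k.factorial : ℝ) * ((k : ℝ) + 1) * ρ ^ k) := by
  set ρ' := (ρ + 1) / 2 with hρ'
  have h1 : 0 < ρ' := by rw [hρ']; linarith
  have h2 : ρ' < 1 := by rw [hρ']; linarith
  have h3 : ρ ≤ ρ' := by rw [hρ']; linarith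
  refine Summable.of_nonneg_of_le (fun k => ?_) (fun k => ?_) (summable_ratio_aux hb h1 h2)
  · have := (rpoch_pos hb k).le
    have : (0:ℝ) ≤ (k.factorial : ℝ) := by positivity
    positivity
  · have hr := (rpoch_pos hb k).le
    have hfa : (0:ℝ) ≤ rpoch b k / (k.factorial : ℝ) * ((k:ℝ)+1) := by positivity
    exact mul_le_mul_of_nonneg_left (pow_le_pow_left₀ hρ0 h3 k) hfa

lemma tsum_binomial (a : ℝ) {x : ℝ} (h0 : 0 ≤ x) (h1 : x < 1) :
    ∑' k : ℕ, rpoch a k / (k.factorial : ℝ) * x ^ k = (1 - x) ^ (-a) := by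
  set b : ℝ := |a| + 1 with hbdef
  have hb0 : 0 < b := by positivity
  set ρ : ℝ := (x + 1) / 2 with hρdef
  have hρ0 : 0 < ρ := by rw [hρdef]; linarith
  have hρ1 : ρ < 1 := by rw [hρdef]; linarith
  have hxρ : x < ρ := by rw [hρdef]; linarith
  set t : Set ℝ := Set.Ioo (-ρ) ρ with htdef
  set coef : ℕ → ℝ := fun k => rpoch a k / (k.factorial : ℝ) with hcoef
  have hcoef_le : ∀ k, |coef k| ≤ rpoch b k / (k.factorial : ℝ) := by
    intro k
    have h3 : (0:ℝ) < (k.factorial : ℝ) := by positivity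
    rw [hcoef, abs_div, abs_of_pos h3]
    exact div_le_div_of_nonneg_right (abs_rpoch_le a k) h3.le
  set g : ℕ → ℝ → ℝ := fun k y => coef k * y ^ k with hg
  set g' : ℕ → ℝ → ℝ := fun k y => coef k * ((k : ℝ) * y ^ (k - 1)) with hg'
  set u : ℕ → ℝ := fun k => rpoch b k / (k.factorial : ℝ) * ((k : ℝ) + 1) * ρ ^ k / ρ with hu
  have hus : Summable u := (summable_ratio_aux hb0 hρ0 hρ1).div_const ρ
  have hgd : ∀ (k : ℕ) (y : ℝ), y ∈ t → HasDerivAt (g k) (g' k y) y := fun k y _ =>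
    (hasDerivAt_pow k y).const_mul (coef k)
  have hbound : ∀ (k : ℕ) (y : ℝ), y ∈ t → ‖g' k y‖ ≤ u k := by
    intro k y hy
    have hyρ : |y| ≤ ρ := by
      rw [abs_le]; exact ⟨hy.1.le, hy.2.le⟩
    have hfk : (0:ℝ) < (k.factorial : ℝ) := by positivity
    have hrb : (0:ℝ) ≤ rpoch b k / (k.factorial : ℝ) := by
      have := (rpoch_pos hb0 k).le; positivity
    have step1 : ‖g' k y‖ ≤ rpoch b k / (k.factorial : ℝ) * ((k : ℝ) * ρ ^ (k - 1)) := by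
      have e2 : ‖y ^ (k-1)‖ ≤ ρ ^ (k-1) := by
        rw [norm_pow, Real.norm_eq_abs]
        exact pow_le_pow_left₀ (abs_nonneg y) hyρ _
      have e3 : ‖(k:ℝ) * y ^ (k-1)‖ ≤ (k:ℝ) * ρ ^ (k-1) := by
        rw [norm_mul, Real.norm_natCast]
        exact mul_le_mul_of_nonneg_left e2 (Nat.cast_nonneg k)
      calc ‖g' k y‖ = ‖coef k‖ * ‖(k:ℝ) * y ^ (k-1)‖ := by rw [hg', norm_mul]
        _ ≤ (rpoch b k / (k.factorial : ℝ)) * ((k:ℝ) * ρ ^ (k-1)) :=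
            mul_le_mul (by simpa [Real.norm_eq_abs] using hcoef_le k) e3 (norm_nonneg _) hrb
    refine step1.trans ?_
    show _ ≤ rpoch b k / (k.factorial:ℝ) * ((k:ℝ)+1) * ρ ^ k / ρ
    rw [div_eq_mul_inv (rpoch b k / (k.factorial:ℝ) * ((k:ℝ)+1) * ρ ^ k) ρ]
    have : (k : ℝ) * ρ ^ (k - 1) ≤ ((k:ℝ) + 1) * ρ ^ k * ρ⁻¹ := by
      cases k with
      | zero => simp; positivity
      | succ m =>
          have : ρ ^ (m + 1) * ρ⁻¹ = ρ ^ m := by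
            rw [pow_succ, mul_assoc, mul_inv_cancel₀ hρ0.ne', mul_one]
          simp only [Nat.succ_sub_one]
          rw [mul_assoc, this]
          have : (0:ℝ) ≤ ρ ^ m := by positivity
          push_cast
          nlinarith
    calc rpoch b k / (k.factorial:ℝ) * ((k:ℝ) * ρ ^ (k-1))
        ≤ rpoch b k / (k.factorial:ℝ) * (((k:ℝ)+1) * ρ ^ k * ρ⁻¹) :=
          mul_le_mul_of_nonneg_left this hrb
      _ = rpoch b k / (k.factorial:ℝ) * ((k:ℝ)+1) * ρ ^ k * ρ⁻¹ := by ring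
  have h0t : (0:ℝ) ∈ t := ⟨by linarith, hρ0⟩
  have hg00 : Summable fun k => g k 0 := by
    apply summable_of_ne_finset_zero (s := ({0} : Finset ℕ))
    intro k hk
    have : k ≠ 0 := by simpa using hk
    simp [hg, zero_pow this]
  have key : ∀ y ∈ t, HasDerivAt (fun z => ∑' k, g k z) (∑' k, g' k y) y := fun y hy =>
    hasDerivAt_tsum_of_isPreconnected hus isOpen_Ioo (convex_Ioo _ _).isPreconnected
      hgd hbound h0t hg00 hy
  have sumg' : ∀ y ∈ t, Summable fun k => g' k y := fun y hy =>
    Summable.of_norm_bounded hus fun k => hbound k y hy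
  have sumg : ∀ y ∈ t, Summable fun k => g k y := by
    intro y hy
    refine Summable.of_norm_bounded hus fun k => ?_
    have hyρ : |y| ≤ ρ := by rw [abs_le]; exact ⟨hy.1.le, hy.2.le⟩
    have hfk : (0:ℝ) < (k.factorial : ℝ) := by positivity
    have hrb : (0:ℝ) ≤ rpoch b k / (k.factorial : ℝ) := by
      have := (rpoch_pos hb0 k).le; positivity
    have e2 : |y| ^ k ≤ ρ ^ k := pow_le_pow_left₀ (abs_nonneg y) hyρ _
    have step1 : ‖g k y‖ ≤ rpoch b k / (k.factorial : ℝ) * ρ ^ k := by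
      rw [hg, norm_mul, norm_pow]
      exact mul_le_mul (hcoef_le k) e2 (by positivity) hrb
    refine step1.trans ?_
    show _ ≤ rpoch b k / (k.factorial:ℝ) * ((k:ℝ)+1) * ρ ^ k / ρ
    rw [le_div_iff₀ hρ0]
    have h1 : ρ ≤ (k:ℝ) + 1 := by
      have : (0:ℝ) ≤ (k:ℝ) := Nat.cast_nonneg k
      linarith
    have hρk : (0:ℝ) ≤ ρ ^ k := by positivity
    calc rpoch b k / (k.factorial:ℝ) * ρ ^ k * ρ
        ≤ rpoch b k / (k.factorial:ℝ) * ρ ^ k * ((k:ℝ)+1) :=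
          mul_le_mul_of_nonneg_left h1 (mul_nonneg hrb hρk)
      _ = rpoch b k / (k.factorial:ℝ) * ((k:ℝ)+1) * ρ ^ k := by ring
  have funeq : ∀ y ∈ t, (1 - y) * (∑' k, g' k y) = a * ∑' k, g k y := by
    intro y hy
    have h2 : ∀ k : ℕ, g' (k+1) y = a * g k y + y * g' k y := by
      intro k
      have hfact : ((k+1).factorial : ℝ) = (k.factorial : ℝ) * ((k:ℝ)+1) := by
        rw [Nat.factorial_succ]; push_cast; ring
      have hfk : ((k.factorial : ℝ)) ≠ 0 := by positivity
      have hfk1 : ((k:ℝ) + 1) ≠ 0 := by positivity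
      simp only [hg, hg', hcoef, rpoch_succ, Nat.succ_sub_one, hfact]
      cases k with
      | zero => simp [rpoch_zero]
      | succ m =>
          push_cast
          have h3 : ((m:ℝ)+1+1) ≠ 0 := by positivity
          have h4 : ((m+1).factorial : ℝ) ≠ 0 := by positivity
          field_simp
          ring
    have hD : ∑' k, g' k y = ∑' k, g' (k+1) y := by
      rw [Summable.tsum_eq_zero_add (sumg' y hy)]
      simp [hg']
    have hsplit : (∑' k, g' (k+1) y) = a * (∑' k, g k y) + y * (∑' k, g' k y) := by
      calc ∑' k, g' (k+1) y = ∑' k, (a * g k y + y * g' k y) := tsum_congr h2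
        _ = (∑' k, a * g k y) + ∑' k, y * g' k y :=
            Summable.tsum_add ((sumg y hy).mul_left a) ((sumg' y hy).mul_left y)
        _ = a * (∑' k, g k y) + y * (∑' k, g' k y) := by rw [tsum_mul_left, tsum_mul_left]
    have hDeq := hD.trans hsplit
    linear_combination hDeq
  set φ : ℝ → ℝ := fun y => (1 - y) ^ a * ∑' k, g k y with hφ
  have hφ' : ∀ y ∈ t, HasDerivAt φ 0 y := by
    intro y hy
    have h1y : 0 < 1 - y := by have := hy.2; linarith
    have hrp : HasDerivAt (fun z : ℝ => (1 - z) ^ a) (-1 * a * (1-y)^(a-1)) y := by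
      have h := ((hasDerivAt_id y).const_sub 1).rpow_const (p := a) (Or.inl h1y.ne')
      simpa using h
    have hmul := hrp.mul (key y hy)
    have hz : -1 * a * (1-y)^(a-1) * (∑' k, g k y) + (1 - y) ^ a * (∑' k, g' k y) = 0 := by
      have hfe := funeq y hy
      have hsp : (1-y)^a = (1-y)^(a-1) * (1-y) := by
        rw [← Real.rpow_add_one h1y.ne']; ring_nf
      rw [hsp]
      linear_combination ((1-y) ^ (a-1)) * hfe
    rw [hφ]
    exact hz ▸ hmul
  have hsub : Set.Icc (0:ℝ) x ⊆ t := fun y hy =>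
    ⟨by have := hy.1; linarith, lt_of_le_of_lt hy.2 hxρ⟩
  have hconst : φ x = φ 0 := by
    refine constant_of_has_deriv_right_zero
      (fun y hy => ((hφ' y (hsub hy)).continuousAt).continuousWithinAt)
      (fun y hy => ((hφ' y (hsub (Set.mem_of_mem_of_subset hy Set.Ico_subset_Icc_self))).hasDerivWithinAt))
      x ⟨h0, le_refl x⟩
  have hS0 : (∑' k, g k 0) = 1 := by
    rw [tsum_eq_single 0 (fun k hk => by simp [hg, zero_pow hk])]
    simp [hg, hcoef, rpoch_zero]
  have hφ0 : φ 0 = 1 := by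
    rw [hφ]; simp [hS0]
  have hfin : (1 - x) ^ a * ∑' k, g k x = 1 := by
    have hx1 : φ x = 1 := hconst.trans hφ0
    simpa [hφ] using hx1
  have hne : (1 - x) ^ a ≠ 0 := (Real.rpow_pos_of_pos (by linarith) a).ne'
  have : (∑' k, g k x) = ((1 - x) ^ a)⁻¹ :=
    eq_inv_of_mul_eq_one_left (by rw [mul_comm]; exact hfin)
  rw [Real.rpow_neg (by linarith : (0:ℝ) ≤ 1 - x)]
  simpa [hg, hcoef] using this

lemma betaIntegrable {x y : ℝ} (hx : 0 < x) (hy : 0 < y) :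
    IntegrableOn (fun u : ℝ => u ^ (x - 1) * (1 - u) ^ (y - 1)) (Set.Ioc 0 1) := by
  have hc := Complex.betaIntegral_convergent (u := (x : ℂ)) (v := (y : ℂ))
    (by simpa using hx) (by simpa using hy)
  rw [intervalIntegrable_iff_integrableOn_Ioc_of_le zero_le_one] at hc
  have hre := hc.re
  refine (IntegrableOn.congr_fun hre (fun u hu => ?_) measurableSet_Ioc)
  have hu0 : (0:ℝ) ≤ u := hu.1.le
  have hu1 : (0:ℝ) ≤ 1 - u := by linarith [hu.2]
  have e1 : ((u:ℂ)) ^ ((x:ℂ) - 1) = ((u ^ (x-1) : ℝ) : ℂ) := by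
    rw [Complex.ofReal_cpow hu0]; push_cast; ring_nf
  have e2 : ((1:ℂ) - (u:ℂ)) ^ ((y:ℂ) - 1) = (((1-u) ^ (y-1) : ℝ) : ℂ) := by
    rw [Complex.ofReal_cpow hu1]; push_cast; ring_nf
  simp [e1, e2, ← Complex.ofReal_mul]

lemma betaIntegral_real {x y : ℝ} (hx : 0 < x) (hy : 0 < y) :
    ∫ u in (0:ℝ)..1, u ^ (x - 1) * (1 - u) ^ (y - 1)
      = Real.Gamma x * Real.Gamma y / Real.Gamma (x + y) := by
  have h1 := Complex.Gamma_mul_Gamma_eq_betaIntegral (s := (x:ℂ)) (t := (y:ℂ))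
    (by simpa using hx) (by simpa using hy)
  have h2 : Complex.betaIntegral x y
      = ((∫ u in (0:ℝ)..1, u ^ (x-1) * (1-u) ^ (y-1) : ℝ) : ℂ) := by
    rw [Complex.betaIntegral, ← intervalIntegral.integral_ofReal]
    refine intervalIntegral.integral_congr fun u hu => ?_
    rw [Set.uIcc_of_le zero_le_one] at hu
    have e1 : ((u:ℂ)) ^ ((x:ℂ) - 1) = ((u ^ (x-1) : ℝ) : ℂ) := by
      rw [Complex.ofReal_cpow hu.1]; push_cast; ring_nf
    have e2 : ((1:ℂ) - (u:ℂ)) ^ ((y:ℂ) - 1) = (((1-u) ^ (y-1) : ℝ) : ℂ) := by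
      rw [Complex.ofReal_cpow (by linarith [hu.2])]; push_cast; ring_nf
    simp [e1, e2, ← Complex.ofReal_mul]
  have hxy : (x:ℂ) + (y:ℂ) = ((x + y : ℝ) : ℂ) := by push_cast; ring
  have hG : Complex.Gamma ((x:ℂ) + (y:ℂ)) = ((Real.Gamma (x+y) : ℝ) : ℂ) := by
    rw [hxy, Complex.Gamma_ofReal]
  have hGne : Real.Gamma (x + y) ≠ 0 := (Real.Gamma_pos_of_pos (by linarith)).ne'
  rw [h2, hG, Complex.Gamma_ofReal, Complex.Gamma_ofReal] at h1
  have := h1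
  rw [← Complex.ofReal_mul, ← Complex.ofReal_mul] at this
  have h3 : Real.Gamma x * Real.Gamma y
      = Real.Gamma (x+y) * ∫ u in (0:ℝ)..1, u ^ (x-1) * (1-u) ^ (y-1) := by
    exact_mod_cast this
  field_simp
  linarith [h3]

lemma beta_shift {p q : ℝ} (hp : 0 < p) (hq : 0 < q) (k : ℕ) :
    ∫ u in (0:ℝ)..1, u ^ (p + (k:ℝ) - 1) * (1 - u) ^ (q - 1)
      = Real.Gamma p * Real.Gamma q / Real.Gamma (p + q) *
          (rpoch p k / rpoch (p + q) k) := by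
  have hpk : 0 < p + (k:ℝ) := by positivity
  rw [betaIntegral_real hpk hq]
  have e1 : Real.Gamma (p + (k:ℝ)) = Real.Gamma p * rpoch p k := Gamma_rpoch hp k
  have e2 : Real.Gamma (p + (k:ℝ) + q) = Real.Gamma (p + q) * rpoch (p + q) k := by
    rw [show p + (k:ℝ) + q = (p + q) + (k:ℝ) by ring]
    exact Gamma_rpoch (by linarith) k
  rw [e1, e2]
  have h1 : Real.Gamma (p + q) ≠ 0 := (Real.Gamma_pos_of_pos (by linarith)).ne'
  have h2 : rpoch (p + q) k ≠ 0 := (rpoch_pos (by linarith) k).ne'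
  field_simp

lemma euler {p q a z : ℝ} (hp : 0 < p) (hq : 0 < q) (hz0 : 0 ≤ z) (hz1 : z < 1) :
    ∫ u in (0:ℝ)..1, u ^ (p - 1) * (1 - u) ^ (q - 1) * (1 - z * u) ^ (-a)
      = Real.Gamma p * Real.Gamma q / Real.Gamma (p + q) *
          ∑' k : ℕ, rpoch a k * rpoch p k / (rpoch (p + q) k * (k.factorial : ℝ)) * z ^ k := by
  set b : ℝ := |a| + 1 with hbdef
  have hb0 : 0 < b := by positivity
  set B : ℝ := Real.Gamma p * Real.Gamma q / Real.Gamma (p + q) with hBdef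
  set F : ℕ → ℝ → ℝ := fun k u =>
    (rpoch a k / (k.factorial : ℝ) * z ^ k) * (u ^ (p + (k:ℝ) - 1) * (1 - u) ^ (q - 1)) with hF
  have hpk : ∀ k : ℕ, (0:ℝ) < p + (k:ℝ) := fun k => by positivity
  have hpt : ∀ u ∈ Set.Ioc (0:ℝ) 1,
      u ^ (p - 1) * (1 - u) ^ (q - 1) * (1 - z * u) ^ (-a) = ∑' k, F k u := by
    intro u hu
    have hu0 : 0 < u := hu.1
    have hu1 : u ≤ 1 := hu.2
    have hzu0 : 0 ≤ z * u := by positivity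
    have hzu1 : z * u < 1 := lt_of_le_of_lt (mul_le_of_le_one_right hz0 hu1) hz1
    rw [← tsum_binomial a hzu0 hzu1, ← tsum_mul_left]
    refine tsum_congr fun k => ?_
    have hsplit : u ^ (p + (k:ℝ) - 1) = u ^ (p - 1) * u ^ (k:ℕ) := by
      rw [← Real.rpow_natCast u k, ← Real.rpow_add hu0]
      ring_nf
    rw [hF]
    simp only [hsplit]
    rw [mul_pow]
    ring
  have hFint : ∀ k, IntegrableOn (F k) (Set.Ioc (0:ℝ) 1) := fun k =>
    ((betaIntegrable (hpk k) hq).const_mul _)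
  have hbeta_nonneg : ∀ (c : ℝ) (u : ℝ), u ∈ Set.Ioc (0:ℝ) 1 →
      (0:ℝ) ≤ u ^ c * (1 - u) ^ (q - 1) := by
    intro c u hu
    have h1 : (0:ℝ) ≤ u := hu.1.le
    have h2 : (0:ℝ) ≤ 1 - u := by linarith [hu.2]
    positivity
  -- the base beta integral and monotone bound
  set B0 : ℝ := ∫ u in Set.Ioc (0:ℝ) 1, u ^ (p - 1) * (1 - u) ^ (q - 1) with hB0
  have hB0nn : 0 ≤ B0 := setIntegral_nonneg measurableSet_Ioc (hbeta_nonneg (p-1))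
  have hmono : ∀ k : ℕ, ∫ u in Set.Ioc (0:ℝ) 1, u ^ (p + (k:ℝ) - 1) * (1 - u) ^ (q - 1) ≤ B0 := by
    intro k
    refine setIntegral_mono_on (betaIntegrable (hpk k) hq) (betaIntegrable hp hq)
      measurableSet_Ioc (fun u hu => ?_)
    have hu0 : 0 < u := hu.1
    have hu1 : u ≤ 1 := hu.2
    have hsplit : u ^ (p + (k:ℝ) - 1) = u ^ (p - 1) * u ^ (k:ℕ) := by
      rw [← Real.rpow_natCast u k, ← Real.rpow_add hu0]; ring_nf
    have h2 : (0:ℝ) ≤ (1 - u) ^ (q - 1) := Real.rpow_nonneg (by linarith) _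
    have h3 : u ^ (k:ℕ) ≤ 1 := pow_le_one₀ hu0.le hu1
    have h4 : (0:ℝ) ≤ u ^ (p-1) := Real.rpow_nonneg hu0.le _
    rw [hsplit]
    have : u ^ (p-1) * u ^ (k:ℕ) ≤ u ^ (p-1) := by nlinarith
    exact mul_le_mul_of_nonneg_right this h2
  have hsum : Summable fun k : ℕ => ∫ u in Set.Ioc (0:ℝ) 1, ‖F k u‖ := by
    have hM : Summable (fun k : ℕ => rpoch b k / (k.factorial : ℝ) * ((k:ℝ)+1) * z ^ k * B0) :=
      (summable_poch_geom hb0 hz0 hz1).mul_right B0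
    refine Summable.of_nonneg_of_le
      (fun k => integral_nonneg fun u => norm_nonneg _) (fun k => ?_) hM
    have hnorm_eq : ∫ u in Set.Ioc (0:ℝ) 1, ‖F k u‖
        = |rpoch a k / (k.factorial : ℝ) * z ^ k| *
            ∫ u in Set.Ioc (0:ℝ) 1, u ^ (p + (k:ℝ) - 1) * (1 - u) ^ (q - 1) := by
      rw [← integral_const_mul]
      refine setIntegral_congr_fun measurableSet_Ioc fun u hu => ?_
      rw [hF]
      simp only [Real.norm_eq_abs]
      rw [abs_mul, abs_of_nonneg (hbeta_nonneg _ u hu)]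
    rw [hnorm_eq]
    have hfk : (0:ℝ) < (k.factorial : ℝ) := by positivity
    have hc1 : |rpoch a k / (k.factorial : ℝ) * z ^ k| ≤ rpoch b k / (k.factorial : ℝ) * z ^ k := by
      rw [abs_mul, abs_div, abs_of_pos hfk, abs_pow, abs_of_nonneg hz0]
      exact mul_le_mul_of_nonneg_right
        (div_le_div_of_nonneg_right (abs_rpoch_le a k) hfk.le) (by positivity)
    have hc0 : (0:ℝ) ≤ |rpoch a k / (k.factorial : ℝ) * z ^ k| := abs_nonneg _
    have hInn : 0 ≤ ∫ u in Set.Ioc (0:ℝ) 1, u ^ (p + (k:ℝ) - 1) * (1 - u) ^ (q - 1) :=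
      setIntegral_nonneg measurableSet_Ioc (hbeta_nonneg _)
    calc |rpoch a k / (k.factorial : ℝ) * z ^ k| *
          ∫ u in Set.Ioc (0:ℝ) 1, u ^ (p + (k:ℝ) - 1) * (1 - u) ^ (q - 1)
        ≤ (rpoch b k / (k.factorial : ℝ) * z ^ k) * B0 :=
          mul_le_mul hc1 (hmono k) hInn (by
            have := (rpoch_pos hb0 k).le
            positivity)
      _ ≤ rpoch b k / (k.factorial : ℝ) * ((k:ℝ)+1) * z ^ k * B0 := by
          have h5 : (0:ℝ) ≤ rpoch b k := (rpoch_pos hb0 k).le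
          have h6 : (1:ℝ) ≤ (k:ℝ) + 1 := by
            have : (0:ℝ) ≤ (k:ℝ) := Nat.cast_nonneg k
            linarith
          have h7 : (0:ℝ) ≤ z ^ k := by positivity
          nlinarith [mul_nonneg (mul_nonneg (div_nonneg h5 hfk.le) h7) hB0nn]
  calc ∫ u in (0:ℝ)..1, u ^ (p - 1) * (1 - u) ^ (q - 1) * (1 - z * u) ^ (-a)
      = ∫ u in Set.Ioc (0:ℝ) 1, u ^ (p - 1) * (1 - u) ^ (q - 1) * (1 - z * u) ^ (-a) :=
        intervalIntegral.integral_of_le zero_le_one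
    _ = ∫ u in Set.Ioc (0:ℝ) 1, ∑' k, F k u := setIntegral_congr_fun measurableSet_Ioc hpt
    _ = ∑' k, ∫ u in Set.Ioc (0:ℝ) 1, F k u :=
        (integral_tsum_of_summable_integral_norm hFint hsum).symm
    _ = ∑' k : ℕ, B * (rpoch a k * rpoch p k / (rpoch (p + q) k * (k.factorial : ℝ)) * z ^ k) := by
        refine tsum_congr fun k => ?_
        have : ∫ u in Set.Ioc (0:ℝ) 1, F k u
            = (rpoch a k / (k.factorial : ℝ) * z ^ k) * (B * (rpoch p k / rpoch (p + q) k)) := by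
          rw [hF, ← intervalIntegral.integral_of_le zero_le_one,
            intervalIntegral.integral_const_mul, beta_shift hp hq k]
        rw [this]
        have h2 : rpoch (p + q) k ≠ 0 := (rpoch_pos (by linarith) k).ne'
        have hfk : ((k.factorial : ℝ)) ≠ 0 := by positivity
        field_simp
    _ = B * ∑' k : ℕ, rpoch a k * rpoch p k / (rpoch (p + q) k * (k.factorial : ℝ)) * z ^ k :=
        tsum_mul_left

/-- The Funk–Hecke type integral evaluation. -/
theorem stmt1 (d : ℕ) (hd : 2 ≤ d) (s w r : ℝ) (hw : 0 < w) (hr : 0 < r) (hwr : w ≠ r) :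
    (0 ≤ 4 * w * r / (w + r) ^ 2 ∧ 4 * w * r / (w + r) ^ 2 < 1) ∧
    ∫ t in Set.Icc (-1 : ℝ) 1,
        (1 - t ^ 2) ^ (((d : ℝ) - 3) / 2) * (w ^ 2 + r ^ 2 - 2 * w * r * t) ^ (-(s / 2))
      = (2 : ℝ) ^ ((d : ℝ) - 2) / (w + r) ^ s *
          ((Real.Gamma (((d : ℝ) - 1) / 2)) ^ 2 / Real.Gamma ((d : ℝ) - 1)) *
          hyp2F1 (((d : ℝ) - 1) / 2) (s / 2) ((d : ℝ) - 1) (4 * w * r / (w + r) ^ 2) := by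
  have hd2 : (2:ℝ) ≤ (d:ℝ) := by exact_mod_cast hd
  set c : ℝ := w + r with hc
  have hc0 : 0 < c := by rw [hc]; positivity
  set z : ℝ := 4 * w * r / c ^ 2 with hz
  have hz0 : 0 ≤ z := by rw [hz]; positivity
  have hz1 : z < 1 := by
    rw [hz, div_lt_one (by positivity)]
    have hne : w - r ≠ 0 := sub_ne_zero.mpr hwr
    have h2 : 0 < (w - r) ^ 2 :=
      lt_of_le_of_ne (sq_nonneg _) (Ne.symm (pow_ne_zero 2 hne))
    rw [hc]; nlinarith
  refine ⟨⟨hz0, hz1⟩, ?_⟩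
  set p : ℝ := ((d:ℝ) - 1) / 2 with hp
  have hp0 : 0 < p := by rw [hp]; linarith
  set a : ℝ := s / 2 with ha
  set K : ℝ := 2 ^ ((d:ℝ) - 3) * c ^ (-s) with hK
  set f : ℝ → ℝ := fun t =>
    (1 - t ^ 2) ^ (((d : ℝ) - 3) / 2) * (w ^ 2 + r ^ 2 - 2 * w * r * t) ^ (-(s / 2)) with hf
  have hpt : Set.EqOn (fun u : ℝ => f (2 * u + -1))
      (fun u : ℝ => K * (u ^ (p - 1) * (1 - u) ^ (p - 1) * (1 - z * u) ^ (-a)))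
      (Set.uIcc 0 1) := by
    intro u hu
    rw [Set.uIcc_of_le zero_le_one] at hu
    obtain ⟨hu0, hu1⟩ := hu
    have h1u : (0:ℝ) ≤ 1 - u := by linarith
    have hzu : (0:ℝ) ≤ 1 - z * u := by
      have : z * u ≤ z := mul_le_of_le_one_right hz0 hu1
      linarith
    simp only [hf]
    rw [show 1 - (2*u + -1)^2 = 4 * (u * (1 - u)) from by ring]
    rw [show w^2 + r^2 - 2*w*r*(2*u + -1) = c^2 * (1 - z * u) from by
      rw [hz, hc]; field_simp; ring]
    rw [show ((d:ℝ)-3)/2 = p - 1 from by rw [hp]; ring]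
    rw [show -(s/2) = -a from by rw [ha]]
    rw [Real.mul_rpow (by norm_num : (0:ℝ) ≤ 4) (mul_nonneg hu0 h1u),
        Real.mul_rpow hu0 h1u,
        Real.mul_rpow (by positivity : (0:ℝ) ≤ c^2) hzu]
    have h24 : (2:ℝ) ^ (2:ℝ) = 4 := by
      have h := Real.rpow_natCast (2:ℝ) 2
      push_cast at h
      rw [h]; norm_num
    have h42 : (4:ℝ) ^ (p - 1) = 2 ^ ((d:ℝ) - 3) := by
      rw [← h24, ← Real.rpow_mul (by norm_num : (0:ℝ) ≤ 2),
        show (2:ℝ) * (p - 1) = (d:ℝ) - 3 from by rw [hp]; ring]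
    have hc2 : ((c:ℝ)^2) ^ (-a) = c ^ (-s) := by
      rw [← Real.rpow_natCast c 2, ← Real.rpow_mul hc0.le,
        show ((2:ℕ):ℝ) * (-a) = -s from by rw [ha]; push_cast; ring]
    rw [h42, hc2, hK]
    ring
  rw [MeasureTheory.integral_Icc_eq_integral_Ioc,
    ← intervalIntegral.integral_of_le (by norm_num : (-1:ℝ) ≤ 1)]
  have hsub : (∫ t in (-1:ℝ)..(1:ℝ), f t) = 2 * ∫ u in (0:ℝ)..1, f (2 * u + -1) := by
    have h := intervalIntegral.integral_comp_mul_add (a := (0:ℝ)) (b := 1) (f := f)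
      (two_ne_zero) (-1)
    rw [show (2:ℝ) * 0 + -1 = -1 from by norm_num,
        show (2:ℝ) * 1 + -1 = 1 from by norm_num] at h
    rw [h, smul_eq_mul]
    ring
  rw [hsub, intervalIntegral.integral_congr hpt, intervalIntegral.integral_const_mul,
    euler hp0 hp0 hz0 hz1]
  have hpp : p + p = (d:ℝ) - 1 := by rw [hp]; ring
  rw [hpp]
  have hhyp : hyp2F1 p a ((d:ℝ)-1) z
      = ∑' k : ℕ, rpoch a k * rpoch p k / (rpoch ((d:ℝ)-1) k * (k.factorial : ℝ)) * z ^ k := by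
    rw [hyp2F1]
    exact tsum_congr fun k => by ring
  rw [hhyp, hK]
  rw [Real.rpow_neg hc0.le]
  have h2pow : 2 * (2:ℝ) ^ ((d:ℝ) - 3) = (2:ℝ) ^ ((d:ℝ) - 2) := by
    rw [show (2:ℝ) * (2:ℝ) ^ ((d:ℝ)-3) = (2:ℝ) ^ (1:ℝ) * (2:ℝ) ^ ((d:ℝ)-3) from by
        rw [Real.rpow_one],
      ← Real.rpow_add (by norm_num : (0:ℝ) < 2),
      show (1:ℝ) + ((d:ℝ) - 3) = (d:ℝ) - 2 from by ring]
  rw [← h2pow]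
  ring
end

section
/- Let t > 0 and x > 0 be real numbers. Then x² − (3/(2πx)) · ∫_0^1 r · √(1−r²) · log( ((r−x)² + t²)/((r+x)² + t²) ) dr = 3t² + 3/2 + (1/x) · Re( ((x+it)² − 1)^{3/2} ), where w^{3/2} = exp((3/2)·Log w) is the principal branch of the complex power (with Log the principal logarithm) and Re denotes the real part. -/
open Real MeasureTheory

noncomputable def F18 (z c d : ℂ) (r : ℝ) : ℂ :=
  -(2 / 3 : ℂ) * (((Real.sqrt (1 - r ^ 2) : ℝ) : ℂ) ^ 3 *
        (Complex.log (z - (r : ℂ)) - Complex.log (z + (r : ℂ))))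
    - 4 * z / 3 *
      ((((r * Real.sqrt (1 - r ^ 2) + Real.arcsin r) / 2 : ℝ) : ℂ)
        + (1 - z ^ 2) * ((Real.arcsin r : ℝ) : ℂ)
        + (1 - z ^ 2) ^ 2 * (Complex.I / (2 * z * d)) *
          (Complex.log (((Real.sqrt (1 - r ^ 2) : ℝ) : ℂ) - Complex.I * c * (r : ℂ)) -
            Complex.log (((Real.sqrt (1 - r ^ 2) : ℝ) : ℂ) + Complex.I * c * (r : ℂ))))

lemma F18_deriv (z c d : ℂ) (hz_ne : z ≠ 0) (hzim : z.im ≠ 0) (hcre : 0 < c.re)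
    (hcz : c * z = d) (hd2 : d * d = z ^ 2 - 1) (hd_ne : d ≠ 0)
    {r : ℝ} (hr0 : 0 < r) (hr1 : r < 1) :
    HasDerivAt (F18 z c d)
      (2 * (r : ℂ) * ((Real.sqrt (1 - r ^ 2) : ℝ) : ℂ) *
        (Complex.log (z - (r : ℂ)) - Complex.log (z + (r : ℂ)))) r := by
  have hrr : 0 < 1 - r ^ 2 := by nlinarith
  have hspos : 0 < Real.sqrt (1 - r ^ 2) := Real.sqrt_pos.2 hrr
  have hsne : Real.sqrt (1 - r ^ 2) ≠ 0 := hspos.ne'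
  have hs2 : Real.sqrt (1 - r ^ 2) ^ 2 = 1 - r ^ 2 := Real.sq_sqrt hrr.le
  have hs2c : ((Real.sqrt (1 - r ^ 2) : ℝ) : ℂ) ^ 2 = 1 - (r : ℂ) ^ 2 := by
    rw [← Complex.ofReal_pow, hs2]; push_cast; ring
  have hscne : ((Real.sqrt (1 - r ^ 2) : ℝ) : ℂ) ≠ 0 := Complex.ofReal_ne_zero.2 hsne
  have hid : HasDerivAt (fun y : ℝ => (y : ℂ)) 1 r := by
    exact Complex.ofRealCLM.hasDerivAt
  -- sqrt derivative
  have hS : HasDerivAt (fun y : ℝ => Real.sqrt (1 - y ^ 2)) (-r / Real.sqrt (1 - r ^ 2)) r := by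
    have h1 : HasDerivAt (fun y : ℝ => 1 - y ^ 2) (-(2 * r)) r := by
      simpa using (hasDerivAt_pow 2 r).const_sub 1
    have h2 := h1.sqrt hrr.ne'
    convert h2 using 1
    field_simp
  have hSc : HasDerivAt (fun y : ℝ => ((Real.sqrt (1 - y ^ 2) : ℝ) : ℂ))
      ((-r / Real.sqrt (1 - r ^ 2) : ℝ) : ℂ) r := hS.ofReal_comp
  have hS3 : HasDerivAt (fun y : ℝ => ((Real.sqrt (1 - y ^ 2) : ℝ) : ℂ) ^ 3)
      (3 * ((Real.sqrt (1 - r ^ 2) : ℝ) : ℂ) ^ 2 * ((-r / Real.sqrt (1 - r ^ 2) : ℝ) : ℂ)) r := by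
    have h := (hSc.mul hSc).mul hSc
    have h2 : (fun y : ℝ => ((Real.sqrt (1 - y ^ 2) : ℝ) : ℂ) ^ 3)
        = fun y : ℝ => ((Real.sqrt (1 - y ^ 2) : ℝ) : ℂ) * ((Real.sqrt (1 - y ^ 2) : ℝ) : ℂ) *
          ((Real.sqrt (1 - y ^ 2) : ℝ) : ℂ) := by
      funext y
      ring
    rw [h2]
    refine h.congr_deriv (Eq.symm ?_)
    simp only [Pi.mul_apply]
    push_cast
    ring
  -- logs of z ∓ r
  have hm1 : z - (r : ℂ) ∈ Complex.slitPlane := by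
    rw [Complex.mem_slitPlane_iff]; right; simpa using hzim
  have hm2 : z + (r : ℂ) ∈ Complex.slitPlane := by
    rw [Complex.mem_slitPlane_iff]; right; simpa using hzim
  have hL1 : HasDerivAt (fun y : ℝ => Complex.log (z - (y : ℂ))) ((-1) / (z - (r : ℂ))) r := by
    exact (hid.const_sub z).clog_real hm1
  have hL2 : HasDerivAt (fun y : ℝ => Complex.log (z + (y : ℂ))) (1 / (z + (r : ℂ))) r := by
    exact (hid.const_add z).clog_real hm2
  have harc : HasDerivAt Real.arcsin (1 / Real.sqrt (1 - r ^ 2)) r :=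
    Real.hasDerivAt_arcsin (by nlinarith) (by nlinarith)
  have hA : HasDerivAt (fun y : ℝ => (y * Real.sqrt (1 - y ^ 2) + Real.arcsin y) / 2)
      (Real.sqrt (1 - r ^ 2)) r := by
    have h2 := (((hasDerivAt_id r).mul hS).add harc).div_const 2
    refine h2.congr_deriv (Eq.symm ?_)
    simp only [id_eq]
    field_simp
    nlinarith [hs2]
  -- logs of s ∓ I c r
  have him3 : ∀ y : ℝ, ((((Real.sqrt (1 - y ^ 2)) : ℝ) : ℂ) - Complex.I * c * (y : ℂ)).im
      = -(c.re * y) := by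
    intro y
    simp [Complex.sub_im, Complex.mul_im, Complex.mul_re]
  have him4 : ∀ y : ℝ, ((((Real.sqrt (1 - y ^ 2)) : ℝ) : ℂ) + Complex.I * c * (y : ℂ)).im
      = c.re * y := by
    intro y
    simp [Complex.add_im, Complex.mul_im, Complex.mul_re]
  have hm3 : (((Real.sqrt (1 - r ^ 2) : ℝ) : ℂ) - Complex.I * c * (r : ℂ)) ∈ Complex.slitPlane := by
    rw [Complex.mem_slitPlane_iff]; right; rw [him3 r]; nlinarith
  have hm4 : (((Real.sqrt (1 - r ^ 2) : ℝ) : ℂ) + Complex.I * c * (r : ℂ)) ∈ Complex.slitPlane := by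
    rw [Complex.mem_slitPlane_iff]; right; rw [him4 r]; nlinarith
  have hne3 : (((Real.sqrt (1 - r ^ 2) : ℝ) : ℂ) - Complex.I * c * (r : ℂ)) ≠ 0 := by
    intro h
    have := him3 r
    rw [h] at this
    simp at this
    rcases this with h' | h'
    · exact hcre.ne' h'
    · exact hr0.ne' h'
  have hne4 : (((Real.sqrt (1 - r ^ 2) : ℝ) : ℂ) + Complex.I * c * (r : ℂ)) ≠ 0 := by
    intro h
    have := him4 r
    rw [h] at this
    simp at this
    rcases this with h' | h'
    · exact hcre.ne' h'
    · exact hr0.ne' h'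
  have hI3 : HasDerivAt (fun y : ℝ => (((Real.sqrt (1 - y ^ 2)) : ℝ) : ℂ) - Complex.I * c * (y : ℂ))
      (((-r / Real.sqrt (1 - r ^ 2) : ℝ) : ℂ) - Complex.I * c) r := by
    refine (hSc.sub (hid.const_mul (Complex.I * c))).congr_deriv ?_
    ring
  have hI4 : HasDerivAt (fun y : ℝ => (((Real.sqrt (1 - y ^ 2)) : ℝ) : ℂ) + Complex.I * c * (y : ℂ))
      (((-r / Real.sqrt (1 - r ^ 2) : ℝ) : ℂ) + Complex.I * c) r := by
    refine (hSc.add (hid.const_mul (Complex.I * c))).congr_deriv ?_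
    ring
  have hL3 := hI3.clog_real hm3
  have hL4 := hI4.clog_real hm4
  have hzr_ne : z - (r : ℂ) ≠ 0 := Complex.slitPlane_ne_zero hm1
  have hzpr_ne : z + (r : ℂ) ≠ 0 := Complex.slitPlane_ne_zero hm2
  have hc : c = d / z := (eq_div_iff hz_ne).2 hcz
  have hB : HasDerivAt (fun y : ℝ =>
      Complex.log ((((Real.sqrt (1 - y ^ 2)) : ℝ) : ℂ) - Complex.I * c * (y : ℂ)) -
        Complex.log ((((Real.sqrt (1 - y ^ 2)) : ℝ) : ℂ) + Complex.I * c * (y : ℂ)))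
      (-(2 * Complex.I * c * z ^ 2) /
        (((Real.sqrt (1 - r ^ 2) : ℝ) : ℂ) * (z ^ 2 - (r : ℂ) ^ 2))) r := by
    have h := hL3.sub hL4
    refine h.congr_deriv (Eq.symm ?_)
    have hz2r : z ^ 2 - (r : ℂ) ^ 2 ≠ 0 := by
      rw [show z ^ 2 - (r : ℂ) ^ 2 = (z - r) * (z + r) by ring]
      exact mul_ne_zero hzr_ne hzpr_ne
    push_cast
    field_simp
    linear_combination
      (-2 * Complex.I * c * (r : ℂ) ^ 2) * hs2c
        + (-2 * Complex.I * c * (r : ℂ) ^ 2 * (c * z + d)) *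
          hcz
        + (-2 * Complex.I * c * (r : ℂ) ^ 2) * hd2
        + (2 * Complex.I * c ^ 3 * z ^ 2 * (r : ℂ) ^ 2) *
          Complex.I_sq
  have hz2r : z ^ 2 - (r : ℂ) ^ 2 ≠ 0 := by
    rw [show z ^ 2 - (r : ℂ) ^ 2 = (z - r) * (z + r) by ring]
    exact mul_ne_zero hzr_ne hzpr_ne
  have hT1 := (hS3.mul (hL1.sub hL2)).const_mul (-(2 / 3 : ℂ))
  have hT2 := hA.ofReal_comp
  have hT3 := (harc.ofReal_comp).const_mul (1 - z ^ 2)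
  have hT4 := hB.const_mul ((1 - z ^ 2) ^ 2 * (Complex.I / (2 * z * d)))
  have hT4' : HasDerivAt (fun y : ℝ => (1 - z ^ 2) ^ 2 * (Complex.I / (2 * z * d)) *
      (Complex.log ((((Real.sqrt (1 - y ^ 2)) : ℝ) : ℂ) - Complex.I * c * (y : ℂ)) -
        Complex.log ((((Real.sqrt (1 - y ^ 2)) : ℝ) : ℂ) + Complex.I * c * (y : ℂ))))
      ((1 - z ^ 2) ^ 2 / (((Real.sqrt (1 - r ^ 2) : ℝ) : ℂ) * (z ^ 2 - (r : ℂ) ^ 2))) r := by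
    refine hT4.congr_deriv (Eq.symm ?_)
    field_simp
    linear_combination
      (-((1 - z ^ 2) ^ 2)) *
          hcz
        + ((1 - z ^ 2) ^ 2 * z * c) * Complex.I_sq
  have hall := hT1.sub (((hT2.add hT3).add hT4').const_mul (4 * z / 3))
  have hgoal : HasDerivAt (F18 z c d)
      (-(2 / 3 : ℂ) * (3 * ((Real.sqrt (1 - r ^ 2) : ℝ) : ℂ) ^ 2 *
            ((-r / Real.sqrt (1 - r ^ 2) : ℝ) : ℂ) *
          (Complex.log (z - (r : ℂ)) - Complex.log (z + (r : ℂ))) +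
        ((Real.sqrt (1 - r ^ 2) : ℝ) : ℂ) ^ 3 * ((-1) / (z - (r : ℂ)) - 1 / (z + (r : ℂ))))
      - 4 * z / 3 * ((((Real.sqrt (1 - r ^ 2) : ℝ) : ℂ) + (1 - z ^ 2) *
            ((1 / Real.sqrt (1 - r ^ 2) : ℝ) : ℂ)) +
        (1 - z ^ 2) ^ 2 / (((Real.sqrt (1 - r ^ 2) : ℝ) : ℂ) * (z ^ 2 - (r : ℂ) ^ 2)))) r := hall
  convert hgoal using 1
  push_cast
  field_simp
  linear_combination
    (-4 * z * (z ^ 2 - (r : ℂ) ^ 2) *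
      (((Real.sqrt (1 - r ^ 2) : ℝ) : ℂ) ^ 2 + (1 - z ^ 2))) * hs2c

/-- Explicit evaluation of the logarithmic potential in the `d = 3`
half-space problem, in terms of a principal-branch complex power. -/
theorem stmt18 (t x : ℝ) (ht : 0 < t) (hx : 0 < x) :
    x ^ 2 - 3 / (2 * Real.pi * x) *
        ∫ r in (0 : ℝ)..1,
          r * Real.sqrt (1 - r ^ 2) *
            Real.log (((r - x) ^ 2 + t ^ 2) / ((r + x) ^ 2 + t ^ 2))
      = 3 * t ^ 2 + 3 / 2 +
          (1 / x) * ((((x : ℂ) + Complex.I * (t : ℂ)) ^ 2 - 1) ^ ((3 : ℂ) / 2)).re := by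
  set z : ℂ := (x : ℂ) + Complex.I * (t : ℂ) with hzdef
  have hzre : z.re = x := by simp [hzdef]
  have hzim : z.im = t := by simp [hzdef]
  have hz_ne : z ≠ 0 := by
    intro h
    rw [h] at hzre
    simp at hzre
    exact hx.ne hzre
  have hwim : (z ^ 2 - 1).im = 2 * (x * t) := by
    simp [pow_two, Complex.mul_im, hzre, hzim]
    ring
  have hwim_pos : 0 < (z ^ 2 - 1).im := by rw [hwim]; positivity
  have hw_ne : z ^ 2 - 1 ≠ 0 := by
    intro h
    rw [h] at hwim_pos
    simp at hwim_pos
  set d : ℂ := (z ^ 2 - 1) ^ ((1 : ℂ) / 2) with hddef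
  have hd2 : d * d = z ^ 2 - 1 := by
    rw [hddef, ← Complex.cpow_add _ _ hw_ne]
    norm_num
  have hd_ne : d ≠ 0 := by
    intro h
    rw [h, mul_zero] at hd2
    exact hw_ne hd2.symm
  have harg_pos : 0 < (z ^ 2 - 1).arg := by
    rcases lt_or_eq_of_le (Complex.arg_nonneg_iff.2 hwim_pos.le) with h | h
    · exact h
    · exfalso
      have h2 := (Complex.arg_eq_zero_iff.mp h.symm).2
      rw [h2] at hwim_pos
      exact lt_irrefl 0 hwim_pos
  have harg_lt : (z ^ 2 - 1).arg < π := Complex.arg_lt_pi_iff.2 (Or.inr hwim_pos.ne')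
  have hdexp : d = Complex.exp (Complex.log (z ^ 2 - 1) * ((1 : ℂ) / 2)) := by
    rw [hddef, Complex.cpow_def_of_ne_zero hw_ne]
  have hlim : (Complex.log (z ^ 2 - 1) * ((1 : ℂ) / 2)).im = (z ^ 2 - 1).arg / 2 := by
    simp [Complex.mul_im, Complex.log_im]
    ring
  have hdre : 0 < d.re := by
    rw [hdexp, Complex.exp_re, hlim]
    exact mul_pos (Real.exp_pos _)
      (Real.cos_pos_of_mem_Ioo ⟨by linarith [Real.pi_pos], by linarith⟩)
  have hdim : 0 < d.im := by
    rw [hdexp, Complex.exp_im, hlim]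
    exact mul_pos (Real.exp_pos _)
      (Real.sin_pos_of_pos_of_lt_pi (by linarith) (by linarith [Real.pi_pos]))
  set c : ℂ := d / z with hcdef
  have hcz : c * z = d := div_mul_cancel₀ _ hz_ne
  have hcre : 0 < c.re := by
    rw [hcdef, Complex.div_re, hzre, hzim]
    have hnorm : 0 < Complex.normSq z := Complex.normSq_pos.2 hz_ne
    exact add_pos (div_pos (mul_pos hdre hx) hnorm) (div_pos (mul_pos hdim ht) hnorm)
  have hderiv : ∀ r ∈ Set.Ioo (0 : ℝ) 1, HasDerivAt (fun r => (F18 z c d r).re)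
      (r * Real.sqrt (1 - r ^ 2) *
        Real.log (((r - x) ^ 2 + t ^ 2) / ((r + x) ^ 2 + t ^ 2))) r := by
    intro r hr
    have hgr := F18_deriv z c d hz_ne (by rw [hzim]; exact ht.ne') hcre hcz hd2 hd_ne hr.1 hr.2
    have hre : HasDerivAt (fun y : ℝ => (F18 z c d y).re)
        ((2 * (r : ℂ) * ((Real.sqrt (1 - r ^ 2) : ℝ) : ℂ) *
          (Complex.log (z - (r : ℂ)) - Complex.log (z + (r : ℂ)))).re) r :=
      Complex.reCLM.hasFDerivAt.comp_hasDerivAt r hgr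
    have hrr : 0 < 1 - r ^ 2 := by nlinarith [hr.1, hr.2]
    have hnum : (0 : ℝ) < (r - x) ^ 2 + t ^ 2 := by positivity
    have hden : (0 : ℝ) < (r + x) ^ 2 + t ^ 2 := by positivity
    have habs1 : ‖z - (r : ℂ)‖ = Real.sqrt ((r - x) ^ 2 + t ^ 2) := by
      rw [Complex.norm_def, Complex.normSq_apply]
      simp only [Complex.sub_re, Complex.sub_im, Complex.ofReal_re, Complex.ofReal_im, hzre, hzim,
        sub_zero]
      congr 1
      ring
    have habs2 : ‖z + (r : ℂ)‖ = Real.sqrt ((r + x) ^ 2 + t ^ 2) := by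
      rw [Complex.norm_def, Complex.normSq_apply]
      simp only [Complex.add_re, Complex.add_im, Complex.ofReal_re, Complex.ofReal_im, hzre, hzim,
        add_zero]
      congr 1
      ring
    have hval : (2 * (r : ℂ) * ((Real.sqrt (1 - r ^ 2) : ℝ) : ℂ) *
        (Complex.log (z - (r : ℂ)) - Complex.log (z + (r : ℂ)))).re
        = r * Real.sqrt (1 - r ^ 2) * Real.log (((r - x) ^ 2 + t ^ 2) / ((r + x) ^ 2 + t ^ 2)) := by
      rw [show (2 * (r : ℂ) * ((Real.sqrt (1 - r ^ 2) : ℝ) : ℂ) : ℂ)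
          = ((2 * r * Real.sqrt (1 - r ^ 2) : ℝ) : ℂ) by push_cast; ring]
      rw [Complex.re_ofReal_mul, Complex.sub_re, Complex.log_re, Complex.log_re, habs1, habs2,
        Real.log_sqrt hnum.le, Real.log_sqrt hden.le, Real.log_div hnum.ne' hden.ne']
      ring
    rw [hval] at hre
    exact hre
  have hcS : Continuous fun r : ℝ => ((Real.sqrt (1 - r ^ 2) : ℝ) : ℂ) :=
    Complex.continuous_ofReal.comp (Real.continuous_sqrt.comp (continuous_const.sub (continuous_pow 2)))
  have hmem1 : ∀ r ∈ Set.Icc (0 : ℝ) 1, z - (r : ℂ) ∈ Complex.slitPlane := by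
    intro r _
    rw [Complex.mem_slitPlane_iff]
    right
    simp only [Complex.sub_im, Complex.ofReal_im, sub_zero, hzim]
    exact ht.ne'
  have hmem2 : ∀ r ∈ Set.Icc (0 : ℝ) 1, z + (r : ℂ) ∈ Complex.slitPlane := by
    intro r _
    rw [Complex.mem_slitPlane_iff]
    right
    simp only [Complex.add_im, Complex.ofReal_im, add_zero, hzim]
    exact ht.ne'
  have hmem3 : ∀ r ∈ Set.Icc (0 : ℝ) 1,
      ((Real.sqrt (1 - r ^ 2) : ℝ) : ℂ) - Complex.I * c * (r : ℂ) ∈ Complex.slitPlane := by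
    intro r hr
    rcases eq_or_lt_of_le hr.1 with h0 | h0
    · rw [Complex.mem_slitPlane_iff]
      left
      rw [← h0]
      norm_num
    · rw [Complex.mem_slitPlane_iff]
      right
      have : (((Real.sqrt (1 - r ^ 2) : ℝ) : ℂ) - Complex.I * c * (r : ℂ)).im = -(c.re * r) := by
        simp [Complex.sub_im, Complex.mul_im, Complex.mul_re]
      rw [this]
      nlinarith [hcre]
  have hmem4 : ∀ r ∈ Set.Icc (0 : ℝ) 1,
      ((Real.sqrt (1 - r ^ 2) : ℝ) : ℂ) + Complex.I * c * (r : ℂ) ∈ Complex.slitPlane := by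
    intro r hr
    rcases eq_or_lt_of_le hr.1 with h0 | h0
    · rw [Complex.mem_slitPlane_iff]
      left
      rw [← h0]
      norm_num
    · rw [Complex.mem_slitPlane_iff]
      right
      have : (((Real.sqrt (1 - r ^ 2) : ℝ) : ℂ) + Complex.I * c * (r : ℂ)).im = c.re * r := by
        simp [Complex.add_im, Complex.mul_im, Complex.mul_re]
      rw [this]
      nlinarith [hcre]
  have hcontF : ContinuousOn (F18 z c d) (Set.Icc (0 : ℝ) 1) := by
    unfold F18
    apply ContinuousOn.sub
    · apply ContinuousOn.mul continuousOn_const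
      apply ContinuousOn.mul (hcS.pow 3).continuousOn
      apply ContinuousOn.sub
      · exact ContinuousOn.clog (continuous_const.sub Complex.continuous_ofReal).continuousOn hmem1
      · exact ContinuousOn.clog (continuous_const.add Complex.continuous_ofReal).continuousOn hmem2
    · apply ContinuousOn.mul continuousOn_const
      apply ContinuousOn.add
      apply ContinuousOn.add
      · exact (Complex.continuous_ofReal.comp
          (((continuous_id.mul (Real.continuous_sqrt.comp (continuous_const.sub (continuous_pow 2)))).add
            Real.continuous_arcsin).div_const 2)).continuousOn
      · exact continuousOn_const.mul
          (Complex.continuous_ofReal.comp Real.continuous_arcsin).continuousOn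
      · apply ContinuousOn.mul continuousOn_const
        apply ContinuousOn.sub
        · exact ContinuousOn.clog
            (hcS.sub (continuous_const.mul Complex.continuous_ofReal)).continuousOn hmem3
        · exact ContinuousOn.clog
            (hcS.add (continuous_const.mul Complex.continuous_ofReal)).continuousOn hmem4
  have hcont : ContinuousOn (fun r => (F18 z c d r).re) (Set.Icc (0 : ℝ) 1) :=
    Complex.continuous_re.comp_continuousOn hcontF
  have hint : IntervalIntegrable (fun r => r * Real.sqrt (1 - r ^ 2) *
      Real.log (((r - x) ^ 2 + t ^ 2) / ((r + x) ^ 2 + t ^ 2))) volume 0 1 := by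
    apply ContinuousOn.intervalIntegrable
    apply ContinuousOn.mul
    · exact (continuous_id.mul (Real.continuous_sqrt.comp (continuous_const.sub (continuous_pow 2)))).continuousOn
    · apply ContinuousOn.log
      · apply ContinuousOn.div
        · exact (((continuous_id.sub continuous_const).pow 2).add continuous_const).continuousOn
        · exact (((continuous_id.add continuous_const).pow 2).add continuous_const).continuousOn
        · intro r _
          positivity
      · intro r _
        have h1 : (0 : ℝ) < (r - x) ^ 2 + t ^ 2 := by positivity
        have h2 : (0 : ℝ) < (r + x) ^ 2 + t ^ 2 := by positivity
        positivity
  have key := intervalIntegral.integral_eq_sub_of_hasDerivAt_of_le zero_le_one hcont hderiv hint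
  have hF0 : (F18 z c d 0).re = 0 := by
    unfold F18
    norm_num [Real.arcsin_zero, Complex.log_one]
  have hlogdiff : Complex.log (-(Complex.I * c)) - Complex.log (Complex.I * c)
      = -((π : ℂ) * Complex.I) := by
    have him : (Complex.I * c).im = c.re := by simp
    have harg : (-(Complex.I * c)).arg = (Complex.I * c).arg - π :=
      Complex.arg_neg_eq_arg_sub_pi_of_im_pos (by rw [him]; exact hcre)
    apply Complex.ext
    · simp [Complex.sub_re, Complex.log_re]
    · simp [Complex.sub_im, Complex.log_im, harg]
  have hP : (z ^ 2 - 1) ^ ((3 : ℂ) / 2) = (z ^ 2 - 1) * d := by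
    rw [show ((3 : ℂ) / 2) = 1 + 1 / 2 by norm_num, Complex.cpow_add _ _ hw_ne, Complex.cpow_one,
      hddef]
  have hF1c : F18 z c d 1 = (((-(π / 3) : ℝ)) : ℂ) * z + (((-(2 * π / 3) : ℝ)) : ℂ) * (z - z ^ 3)
      + (((-(2 * π / 3) : ℝ)) : ℂ) * ((z ^ 2 - 1) ^ ((3 : ℂ) / 2)) := by
    unfold F18
    rw [show Real.sqrt (1 - (1 : ℝ) ^ 2) = 0 by norm_num]
    rw [show ((0 : ℝ) : ℂ) - Complex.I * c * ((1 : ℝ) : ℂ) = -(Complex.I * c) by push_cast; ring]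
    rw [show ((0 : ℝ) : ℂ) + Complex.I * c * ((1 : ℝ) : ℂ) = Complex.I * c by push_cast; ring]
    rw [hlogdiff, hP, Real.arcsin_one]
    push_cast
    field_simp
    linear_combination (8 * (π : ℂ) * (1 - z ^ 2) ^ 2) * Complex.I_sq
      + (8 * (π : ℂ) * (z ^ 2 - 1)) * hd2
  have hz3re : (z ^ 3).re = x ^ 3 - 3 * x * t ^ 2 := by
    simp only [pow_succ, pow_zero, one_mul, Complex.mul_re, Complex.mul_im, hzre, hzim]
    ring
  have hF1 : (F18 z c d 1).re = -(π / 3) * x - 2 * π / 3 * (x - (x ^ 3 - 3 * x * t ^ 2))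
      - 2 * π / 3 * ((z ^ 2 - 1) ^ ((3 : ℂ) / 2)).re := by
    rw [hF1c]
    simp only [Complex.add_re, Complex.sub_re, Complex.re_ofReal_mul, hzre, hz3re]
    ring
  rw [key, hF0, hF1]
  have hπ : Real.pi ≠ 0 := Real.pi_ne_zero
  have hx' : x ≠ 0 := hx.ne'
  field_simp
  ring
end

section
/- Let t be a real number and define G(x) := 3t² + 3/2 + (1/x) · Re( ((x+it)² − 1)^{3/2} ) for x > 0, where w^{3/2} = exp((3/2)·Log w) is the principal branch of the complex power. Then G is nondecreasing on (0, ∞): for all real numbers 0 < x₁ ≤ x₂, G(x₁) ≤ G(x₂). -/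
open Real

private lemma stmt19_key1 (x t a b : ℝ) (hx : 0 < x) (ha : 0 < a)
    (h1 : a^2 - b^2 = x^2 - t^2 - 1) (h2 : a*b = x*t) :
    a^3 - 3*a*b^2 ≤ 3*(x*a - t*b) * x := by
  have hq : a^4 = (x^2 - t^2 - 1)*a^2 + x^2*t^2 := by
    linear_combination a^2 * h1 + (a*b + x*t) * h2
  have ha2 : a^2 ≤ 3*x^2 := by
    nlinarith [mul_pos ha ha, mul_pos hx hx, sq_nonneg (a*t), sq_nonneg t]
  have htb : x*t*b = a*b^2 := by nlinarith [h2]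
  nlinarith [mul_nonneg ha.le (sub_nonneg.2 ha2)]

private lemma stmt19_deriv_aux (t : ℝ) (ht : t ≠ 0) (x : ℝ) (hx : 0 < x) :
    ∃ D : ℝ, 0 ≤ D ∧ HasDerivAt (fun y : ℝ =>
      3*t^2 + 3/2 + (1/y) * ((((y:ℂ) + Complex.I*(t:ℂ))^2 - 1) ^ ((3:ℂ)/2)).re) D x := by
  set z : ℂ := (x:ℂ) + Complex.I*(t:ℂ) with hz
  set w : ℂ := z^2 - 1 with hw
  set s : ℂ := w ^ ((1:ℂ)/2) with hs
  have hzre : z.re = x := by simp [hz]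
  have hzim : z.im = t := by simp [hz]
  have hwre : w.re = x^2 - t^2 - 1 := by
    simp [hw, pow_two, Complex.mul_re, hzre, hzim]; try ring
  have hwim : w.im = 2*x*t := by
    simp [hw, pow_two, Complex.mul_im, hzre, hzim]; try ring
  have hslit : w ∈ Complex.slitPlane := Or.inr (by
    rw [hwim]; exact mul_ne_zero (by positivity) ht)
  have hw0 : w ≠ 0 := Complex.slitPlane_ne_zero hslit
  have hs2 : s^2 = w := by
    rw [hs, ← Complex.cpow_nat_mul]
    norm_num
  have h32 : w ^ ((3:ℂ)/2) = s^3 := by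
    rw [hs, ← Complex.cpow_nat_mul]
    norm_num
  have hab1 : s.re^2 - s.im^2 = x^2 - t^2 - 1 := by
    have hre := congrArg Complex.re hs2
    rw [pow_two, Complex.mul_re, hwre] at hre
    linear_combination hre
  have hab2 : s.re * s.im = x*t := by
    have him := congrArg Complex.im hs2
    rw [pow_two, Complex.mul_im, hwim] at him
    linarith
  have hapos : 0 < s.re := by
    have hdef : s = Complex.exp (Complex.log w * ((1:ℂ)/2)) := by
      rw [hs, Complex.cpow_def_of_ne_zero hw0]
    have hre : s.re = Real.exp ((Complex.log w * ((1:ℂ)/2)).re) *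
        Real.cos ((Complex.log w * ((1:ℂ)/2)).im) := by
      rw [hdef, Complex.exp_re]
    have him : (Complex.log w * ((1:ℂ)/2)).im = w.arg / 2 := by
      simp [Complex.mul_im, Complex.log_im]; ring
    have harg1 : -π < w.arg := Complex.neg_pi_lt_arg w
    have harg2 : w.arg < π :=
      lt_of_le_of_ne (Complex.arg_le_pi w) (Complex.slitPlane_arg_ne_pi hslit)
    have hcos : 0 < Real.cos (w.arg / 2) :=
      Real.cos_pos_of_mem_Ioo ⟨by linarith, by linarith⟩
    rw [hre, him]
    exact mul_pos (Real.exp_pos _) hcos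
  have h1 : HasDerivAt (fun y : ℂ => (y + Complex.I*(t:ℂ))^2 - 1) (2*z) (x:ℂ) := by
    have h0 := (((hasDerivAt_id (x:ℂ)).add_const (Complex.I*(t:ℂ))).pow 2).sub_const 1
    refine h0.congr_deriv ?_
    simp [hz]
  have h2 := h1.cpow_const (c := (3:ℂ)/2) hslit
  have h3 : HasDerivAt (fun y : ℝ => ((((y:ℂ) + Complex.I*(t:ℂ))^2 - 1) ^ ((3:ℂ)/2)))
      ((3:ℂ)/2 * w ^ ((3:ℂ)/2 - 1) * (2*z)) x := h2.comp_ofReal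
  have h4 : HasDerivAt (fun y : ℝ => ((((y:ℂ) + Complex.I*(t:ℂ))^2 - 1) ^ ((3:ℂ)/2)).re)
      (((3:ℂ)/2 * w ^ ((3:ℂ)/2 - 1) * (2*z)).re) x :=
    Complex.reCLM.hasFDerivAt.comp_hasDerivAt x h3
  have h5 : HasDerivAt (fun y : ℝ => ((((y:ℂ) + Complex.I*(t:ℂ))^2 - 1) ^ ((3:ℂ)/2)).re / y)
      ((((3:ℂ)/2 * w ^ ((3:ℂ)/2 - 1) * (2*z)).re * x
        - ((((x:ℂ) + Complex.I*(t:ℂ))^2 - 1) ^ ((3:ℂ)/2)).re * 1) / x^2) x :=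
    h4.div (hasDerivAt_id x) hx.ne'
  have h6 := h5.const_add (3*t^2 + 3/2)
  refine ⟨_, ?_, by simpa only [one_div, ← div_eq_inv_mul] using h6⟩
  have hDer : ((3:ℂ)/2 * w ^ ((3:ℂ)/2 - 1) * (2*z)).re = 3*(x*s.re - t*s.im) := by
    have he : (3:ℂ)/2 - 1 = (1:ℂ)/2 := by norm_num
    rw [he, ← hs, show (3:ℂ)/2 * s * (2*z) = 3*(z*s) by ring]
    simp [Complex.mul_re, hzre, hzim]
  have hVal : ((((x:ℂ) + Complex.I*(t:ℂ))^2 - 1) ^ ((3:ℂ)/2)).re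
      = s.re^3 - 3*s.re*s.im^2 := by
    rw [show (((x:ℂ) + Complex.I*(t:ℂ))^2 - 1) = w from rfl, h32]
    simp [pow_succ, Complex.mul_re, Complex.mul_im]
    ring
  rw [hDer, hVal]
  have hnum := stmt19_key1 x t s.re s.im hx hapos hab1 hab2
  apply div_nonneg _ (by positivity)
  linarith

private lemma stmt19_re_t0 (x : ℝ) : ((((x:ℂ) + Complex.I*((0:ℝ):ℂ))^2 - 1) ^ ((3:ℂ)/2)).re
    = Real.sqrt ((x^2-1)^3) := by
  have hb : ((x:ℂ) + Complex.I*((0:ℝ):ℂ))^2 - 1 = ((x^2 - 1 : ℝ):ℂ) := by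
    push_cast; ring
  rw [hb]
  rcases le_or_gt 0 (x^2 - 1) with hr | hr
  · rw [show ((3:ℂ)/2) = ((3/2:ℝ):ℂ) by norm_num, ← Complex.ofReal_cpow hr,
      Complex.ofReal_re, Real.sqrt_eq_rpow, ← Real.rpow_natCast (x^2-1) 3,
      ← Real.rpow_mul hr]
    norm_num
  · have h0 : ((x^2 - 1 : ℝ):ℂ) ≠ 0 := Complex.ofReal_ne_zero.mpr hr.ne
    rw [show ((3:ℂ)/2) = ((3/2:ℝ):ℂ) by norm_num,
      Complex.cpow_def_of_ne_zero h0, Complex.exp_re]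
    have him : (Complex.log ((x^2-1:ℝ):ℂ) * (((3/2:ℝ)):ℂ)).im = π/2 + π := by
      simp only [Complex.mul_im, Complex.log_im, Complex.ofReal_im, Complex.ofReal_re,
        Complex.arg_ofReal_of_neg hr]
      ring
    rw [him, Real.cos_add_pi, Real.cos_pi_div_two]
    rw [Real.sqrt_eq_zero'.mpr (Odd.pow_nonpos (by decide) hr.le)]
    ring

private lemma stmt19_mono_t0 (x₁ x₂ : ℝ) (h1 : 0 < x₁) (h12 : x₁ ≤ x₂) :
    (1/x₁) * Real.sqrt ((x₁^2-1)^3) ≤ (1/x₂) * Real.sqrt ((x₂^2-1)^3) := by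
  have h2 : 0 < x₂ := lt_of_lt_of_le h1 h12
  rcases le_or_gt x₁ 1 with hle | hgt
  · have hz : (x₁^2-1)^3 ≤ 0 := Odd.pow_nonpos (by decide) (by nlinarith)
    rw [Real.sqrt_eq_zero'.mpr hz, mul_zero]
    exact mul_nonneg (one_div_nonneg.mpr h2.le) (Real.sqrt_nonneg _)
  · have hp : (0:ℝ) ≤ x₁^2 - 1 := by nlinarith
    have hq : (0:ℝ) ≤ x₂^2 - 1 := by nlinarith
    have hA : (0:ℝ) ≤ (x₁^2-1)^3 := pow_nonneg hp 3
    have hB : (0:ℝ) ≤ (x₂^2-1)^3 := pow_nonneg hq 3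
    have key2 : (x₁^2-1)^3 * x₂^2 ≤ (x₂^2-1)^3 * x₁^2 := by
      have hid : (x₂^2-1)^3 * x₁^2 - (x₁^2-1)^3 * x₂^2
          = (x₂^2 - x₁^2) * ((x₁^2-1)^2 + (x₁^2-1)*(x₂^2-1) + (x₂^2-1)^2
            + (x₁^2-1)*(x₂^2-1)*((x₁^2-1)+(x₂^2-1))) := by ring
      nlinarith [mul_nonneg (mul_nonneg hp hq) (by linarith : (0:ℝ) ≤ (x₁^2-1)+(x₂^2-1)),
        mul_nonneg hp hq, sq_nonneg (x₁^2-1), sq_nonneg (x₂^2-1),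
        mul_nonneg (by nlinarith : (0:ℝ) ≤ x₂^2 - x₁^2)
          (by nlinarith [mul_nonneg (mul_nonneg hp hq) (by linarith : (0:ℝ) ≤ (x₁^2-1)+(x₂^2-1)), mul_nonneg hp hq, sq_nonneg (x₁^2-1), sq_nonneg (x₂^2-1)] :
            (0:ℝ) ≤ (x₁^2-1)^2 + (x₁^2-1)*(x₂^2-1) + (x₂^2-1)^2
            + (x₁^2-1)*(x₂^2-1)*((x₁^2-1)+(x₂^2-1)))]
    rw [one_div, inv_mul_eq_div, one_div, inv_mul_eq_div, div_le_div_iff₀ h1 h2]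
    calc Real.sqrt ((x₁^2-1)^3) * x₂ = Real.sqrt ((x₁^2-1)^3 * x₂^2) := by
          rw [Real.sqrt_mul hA, Real.sqrt_sq h2.le]
      _ ≤ Real.sqrt ((x₂^2-1)^3 * x₁^2) := Real.sqrt_le_sqrt key2
      _ = Real.sqrt ((x₂^2-1)^3) * x₁ := by
          rw [Real.sqrt_mul hB, Real.sqrt_sq h1.le]

/-- The function
`G(x) = 3t² + 3/2 + (1/x)·Re(((x+it)²−1)^{3/2})` is nondecreasing on `(0,∞)`,
where the complex power is taken with the principal branch. -/
theorem stmt19 (t : ℝ) (G : ℝ → ℝ)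
    (hG : ∀ x : ℝ, 0 < x → G x =
      3 * t ^ 2 + 3 / 2 +
        (1 / x) * ((((x : ℂ) + Complex.I * (t : ℂ)) ^ 2 - 1) ^ ((3 : ℂ) / 2)).re) :
    ∀ x₁ x₂ : ℝ, 0 < x₁ → x₁ ≤ x₂ → G x₁ ≤ G x₂ := by
  intro x₁ x₂ hx₁ h12
  have hx₂ : 0 < x₂ := lt_of_lt_of_le hx₁ h12
  rw [hG x₁ hx₁, hG x₂ hx₂]
  by_cases ht : t = 0
  · subst ht
    rw [stmt19_re_t0 x₁, stmt19_re_t0 x₂]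
    have := stmt19_mono_t0 x₁ x₂ hx₁ h12
    linarith
  · set F : ℝ → ℝ := fun y : ℝ =>
      3*t^2 + 3/2 + (1/y) * ((((y:ℂ) + Complex.I*(t:ℂ))^2 - 1) ^ ((3:ℂ)/2)).re with hF
    have hdiff : DifferentiableOn ℝ F (interior (Set.Ioi (0:ℝ))) := by
      rw [interior_Ioi]
      intro y hy
      exact ((stmt19_deriv_aux t ht y hy).choose_spec.2).differentiableAt.differentiableWithinAt
    have hmono : MonotoneOn F (Set.Ioi (0:ℝ)) := by
      apply monotoneOn_of_deriv_nonneg (convex_Ioi 0) ?_ hdiff ?_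
      · intro y hy
        exact ((stmt19_deriv_aux t ht y hy).choose_spec.2).differentiableAt.continuousAt.continuousWithinAt
      · rw [interior_Ioi]
        intro y hy
        obtain ⟨D, hD0, hD⟩ := stmt19_deriv_aux t ht y hy
        rw [hD.deriv]
        exact hD0
    have := hmono (Set.mem_Ioi.mpr hx₁) (Set.mem_Ioi.mpr hx₂) h12
    simpa [hF] using this
end
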